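/- arXiv:1512.05223 — 4 statements merged into one kernel-verified Lean document; each statement's English description precedes it below -/
import Mathlib

section
/- Harary's theorem: a signed graph G is balanced if and only if every cycle of G is positive. -/
open SimpleGraph

/-- A signed graph `(G, sign)` is balanced: there is a bipartition (given by `f`)
such that an edge is positive (`sign = true`) iff its endpoints lie in the same part. -/
def IsBalancedSigned {V : Type*} (G : SimpleGraph V) (sign : V → V → Bool) : Prop :=
  ∃ f : V → Bool, ∀ u v, G.Adj u v → sign u v = (f u == f v)

/-- `beta G sign` : the maximum number of edges of a balanced subgraph of `G`
(subgraphs inherit the signs). -/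
noncomputable def beta {V : Type*} (G : SimpleGraph V) (sign : V → V → Bool) : ℕ :=
  sSup {m | ∃ H : SimpleGraph V, H ≤ G ∧ IsBalancedSigned H sign ∧ H.edgeSet.ncard = m}

section Aux

variable {V : Type*} {G : SimpleGraph V} (sign : V → V → Bool)

/-- Number of negative edges (darts) along a walk. -/
def negCount {a b : V} (w : G.Walk a b) : ℕ :=
  w.darts.countP (fun d => !(sign d.toProd.1 d.toProd.2))

lemma negCount_nil {a : V} : negCount sign (Walk.nil : G.Walk a a) = 0 := rfl

lemma negCount_cons {a b c : V} (h : G.Adj a b) (w : G.Walk b c) :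
    negCount sign (Walk.cons h w) =
      negCount sign w + (if !(sign a b) then 1 else 0) := by
  simp [negCount, List.countP_cons]

lemma negCount_append {a b c : V} (p : G.Walk a b) (q : G.Walk b c) :
    negCount sign (p.append q) = negCount sign p + negCount sign q := by
  simp [negCount, Walk.darts_append, List.countP_append]

lemma negCount_reverse (hsym : ∀ u v, sign u v = sign v u) {a b : V} (w : G.Walk a b) :
    negCount sign w.reverse = negCount sign w := by
  simp only [negCount, Walk.darts_reverse, List.countP_reverse, List.countP_map]
  congr 1
  funext d
  simp [Function.comp, SimpleGraph.Dart.symm, hsym d.toProd.1 d.toProd.2]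

lemma negCount_copy {a b a' b' : V} (w : G.Walk a b) (ha : a = a') (hb : b = b') :
    negCount sign (w.copy ha hb) = negCount sign w := by
  subst ha; subst hb; rfl

/-- An edge joining the two endpoints of a nodup-support walk forces length 1. -/
lemma length_eq_one_of_edge_mem {y v : V} (r : G.Walk y v) (hr : r.support.Nodup)
    (he : s(v, y) ∈ r.edges) : r.length = 1 := by
  cases r with
  | nil => simp at he
  | @cons _ z _ h' r' =>
    simp only [Walk.edges_cons, List.mem_cons] at he
    rcases he with he | he
    · rw [Sym2.eq_iff] at he
      rcases he with ⟨hvy, hyz⟩ | ⟨hvz, -⟩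
      · subst hyz; exact absurd h' (G.irrefl)
      · subst hvz
        have hp : r'.IsPath := by
          rw [Walk.isPath_def]
          simp only [Walk.support_cons, List.nodup_cons] at hr
          exact hr.2
        rw [Walk.isPath_iff_eq_nil] at hp
        subst hp
        simp
    · exfalso
      have hy : y ∈ r'.support := Walk.snd_mem_support_of_mem_edges r' he
      simp only [Walk.support_cons, List.nodup_cons] at hr
      exact hr.1 hy

/-- If every cycle has an even number of negative edges, then so does every closed walk. -/
lemma closed_walk_even (hsym : ∀ u v, sign u v = sign v u)
    (hcyc : ∀ (v : V) (w : G.Walk v v), w.IsCycle → Even (negCount sign w)) :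
    ∀ (v : V) (w : G.Walk v v), Even (negCount sign w) := by
  classical
  suffices H : ∀ (n : ℕ) (v : V) (w : G.Walk v v), w.length = n → Even (negCount sign w) by
    intro v w; exact H w.length v w rfl
  intro n
  induction n using Nat.strong_induction_on with
  | _ n ih =>
    intro v w hlen
    cases w with
    | nil => simp [negCount_nil]
    | @cons _ y _ h r =>
      by_cases hnd : r.support.Nodup
      · by_cases he : s(v, y) ∈ r.edges
        · -- backtracking walk of length 2
          have h1 : r.length = 1 := length_eq_one_of_edge_mem r hnd he
          cases r with
          | nil => simp at h1
          | @cons _ z _ h2 r2 =>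
            cases r2 with
            | nil =>
              rw [negCount_cons, negCount_cons, negCount_nil, hsym y v]
              cases hs : sign v y <;> simp [Nat.even_add]
            | cons h3 r3 => simp [Walk.length_cons] at h1
        · -- it's a cycle
          have hc : (Walk.cons h r).IsCycle := by
            rw [Walk.cons_isCycle_iff]
            exact ⟨(Walk.isPath_def _).mpr hnd, he⟩
          exact hcyc v _ hc
      · -- duplicated vertex: split the walk
        rw [← List.exists_duplicate_iff_not_nodup] at hnd
        obtain ⟨x, hdup⟩ := hnd
        rw [List.duplicate_iff_two_le_count] at hdup
        have hx : x ∈ r.support := by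
          rw [← List.count_pos_iff]; omega
        have hspec : (r.takeUntil x hx).append (r.dropUntil x hx) = r := Walk.take_spec r hx
        have hcount_t : (r.takeUntil x hx).support.count x = 1 :=
          Walk.count_support_takeUntil_eq_one r hx
        have hsup : r.support = (r.takeUntil x hx).support ++ (r.dropUntil x hx).support.tail := by
          conv_lhs => rw [← hspec]
          rw [Walk.support_append]
        have hxb : x ∈ (r.dropUntil x hx).support.tail := by
          rw [hsup, List.count_append, hcount_t] at hdup
          rw [← List.count_pos_iff]; omega
        set t := r.takeUntil x hx with ht
        cases hbeq : r.dropUntil x hx with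
        | nil => rw [hbeq] at hxb; simp at hxb
        | @cons _ z _ hb2 b2 =>
          rw [hbeq] at hxb
          have hxb2 : x ∈ b2.support := by simpa using hxb
          have hspec2 : (b2.takeUntil x hxb2).append (b2.dropUntil x hxb2) = b2 :=
            Walk.take_spec b2 hxb2
          set m := b2.takeUntil x hxb2 with hm
          set e := b2.dropUntil x hxb2 with hee
          -- the two shorter closed walks
          have hA : Even (negCount sign (Walk.cons hb2 m)) := by
            refine ih (Walk.cons hb2 m).length ?_ x (Walk.cons hb2 m) rfl
            have hr : r.length = t.length + (1 + (m.length + e.length)) := by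
              conv_lhs => rw [← hspec, hbeq]
              rw [Walk.length_append, Walk.length_cons]
              conv_lhs => rw [← hspec2]
              rw [Walk.length_append]
              ring
            simp only [Walk.length_cons] at *
            omega
          have hC : Even (negCount sign ((Walk.cons h t).append e)) := by
            refine ih ((Walk.cons h t).append e).length ?_ v _ rfl
            have hr : r.length = t.length + (1 + (m.length + e.length)) := by
              conv_lhs => rw [← hspec, hbeq]
              rw [Walk.length_append, Walk.length_cons]
              conv_lhs => rw [← hspec2]
              rw [Walk.length_append]
              ring
            simp only [Walk.length_append, Walk.length_cons] at *
            omega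
          have hsum : negCount sign (Walk.cons h r) =
              negCount sign (Walk.cons hb2 m) + negCount sign ((Walk.cons h t).append e) := by
            conv_lhs => rw [show r = t.append (Walk.cons hb2 (m.append e)) by
              rw [hspec2, ← hbeq, hspec]]
            rw [negCount_cons, negCount_append, negCount_cons, negCount_append,
              negCount_cons, negCount_append, negCount_cons]
            ring
          rw [hsum]
          exact hA.add hC

lemma walk_parity (f : V → Bool) (hf : ∀ u v, G.Adj u v → sign u v = (f u == f v))
    {a b : V} (w : G.Walk a b) : Even (negCount sign w) ↔ f a = f b := by
  induction w with
  | nil => simp [negCount_nil]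
  | @cons a c b h p ihp =>
    rw [negCount_cons, Nat.even_add, ihp, hf a c h]
    cases hac : f a <;> cases hcb : f c <;> cases hb : f b <;> simp

end Aux

/-- Harary: a signed graph is balanced iff every cycle is positive,
i.e. every cycle contains an even number of negative edges. -/
theorem stmt3 {V : Type*} (G : SimpleGraph V) (sign : V → V → Bool)
    (hsym : ∀ u v, sign u v = sign v u) :
    IsBalancedSigned G sign ↔
      ∀ (v : V) (w : G.Walk v v), w.IsCycle →
        Even (w.darts.countP (fun d => !(sign d.toProd.1 d.toProd.2))) := by
  classical
  constructor
  · rintro ⟨f, hf⟩ v w _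
    exact (walk_parity sign f hf w).mpr rfl
  · intro hcyc
    have key := closed_walk_even sign hsym hcyc
    set rt : V → V := fun v => ((G.connectedComponentMk v).out) with hrt_def
    have hre : ∀ v, G.Reachable (rt v) v := fun v =>
      ConnectedComponent.exact ((G.connectedComponentMk v).out_eq)
    let p : ∀ v, G.Walk (rt v) v := fun v => (hre v).some
    refine ⟨fun v => decide (Odd (negCount sign (p v))), ?_⟩
    intro u v huv
    have hrt : rt u = rt v := by
      have hcc : G.connectedComponentMk u = G.connectedComponentMk v :=
        ConnectedComponent.sound huv.reachable
      simp only [hrt_def, hcc]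
    have hW := key (rt v)
      ((((p u).copy hrt rfl).append (Walk.cons huv Walk.nil)).append (p v).reverse)
    rw [negCount_append, negCount_append, negCount_copy, negCount_reverse sign hsym,
      negCount_cons, negCount_nil] at hW
    rw [Nat.even_iff] at hW
    have hobu : Odd (negCount sign (p u)) ↔ negCount sign (p u) % 2 = 1 := Nat.odd_iff
    have hobv : Odd (negCount sign (p v)) ↔ negCount sign (p v) % 2 = 1 := Nat.odd_iff
    cases hs : sign u v
    · rw [hs] at hW
      simp at hW
      have hne : decide (Odd (negCount sign (p u))) ≠ decide (Odd (negCount sign (p v))) := by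
        rw [ne_eq, decide_eq_decide, hobu, hobv]
        omega
      exact (beq_eq_false_iff_ne.mpr hne).symm
    · rw [hs] at hW
      simp at hW
      have heq : decide (Odd (negCount sign (p u))) = decide (Odd (negCount sign (p v))) := by
        rw [decide_eq_decide, hobu, hobv]
        omega
      simp [heq]
end

section
/- Let G = (V,E) be a connected signed graph and let V = U ∪ W with U ∩ W = ∅, U ≠ ∅, and W ≠ ∅. Then β(G) ≥ β(G[U]) + β(G[W]) + |E(U,W)|/2, where E(U,W) is the set of edges with one endpoint in U and the other in W. -/
open SimpleGraph

lemma betaSet_nonempty {V : Type*} (G : SimpleGraph V) (sign : V → V → Bool) :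
    {m | ∃ H : SimpleGraph V, H ≤ G ∧ IsBalancedSigned H sign ∧ H.edgeSet.ncard = m}.Nonempty :=
  ⟨0, ⊥, bot_le, ⟨fun _ => true, fun u v h => by simp at h⟩, by simp⟩

lemma betaSet_bdd {V : Type*} [Finite V] (G : SimpleGraph V) (sign : V → V → Bool) :
    BddAbove {m | ∃ H : SimpleGraph V, H ≤ G ∧ IsBalancedSigned H sign ∧ H.edgeSet.ncard = m} := by
  refine ⟨G.edgeSet.ncard, ?_⟩
  rintro m ⟨H, hle, -, rfl⟩
  exact Set.ncard_le_ncard (edgeSet_mono hle) (Set.toFinite _)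

lemma exists_beta_witness {V : Type*} [Finite V] (G : SimpleGraph V) (sign : V → V → Bool) :
    ∃ H : SimpleGraph V, H ≤ G ∧ IsBalancedSigned H sign ∧ H.edgeSet.ncard = beta G sign :=
  Nat.sSup_mem (betaSet_nonempty G sign) (betaSet_bdd G sign)

lemma le_beta {V : Type*} [Finite V] {G : SimpleGraph V} {sign : V → V → Bool}
    {H : SimpleGraph V} (hle : H ≤ G) (hbal : IsBalancedSigned H sign) :
    H.edgeSet.ncard ≤ beta G sign :=
  le_csSup (betaSet_bdd G sign) ⟨H, hle, hbal, rfl⟩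

lemma edgeSet_map' {V W : Type*} (f : V ↪ W) (G : SimpleGraph V) :
    (G.map f).edgeSet = Sym2.map f '' G.edgeSet := by
  ext e
  refine Sym2.ind (fun x y => ?_) e
  constructor
  · rw [mem_edgeSet, map_adj]
    rintro ⟨a, b, hab, rfl, rfl⟩
    exact ⟨s(a, b), hab, rfl⟩
  · rintro ⟨e', he', hmap⟩
    revert hmap he'
    refine Sym2.ind (fun a b => ?_) e'
    intro he' hmap
    rw [Sym2.map_pair_eq, Sym2.eq_iff] at hmap
    rw [mem_edgeSet, map_adj]
    rcases hmap with ⟨rfl, rfl⟩ | ⟨rfl, rfl⟩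
    · exact ⟨a, b, he', rfl, rfl⟩
    · exact ⟨b, a, he'.symm, rfl, rfl⟩

lemma bool1 : ∀ a b : Bool, (a == b) = (b == a) := by decide
lemma bool2 : ∀ ε a b : Bool, (xor ε a == xor ε b) = (a == b) := by decide
lemma bool3 : ∀ s a b : Bool, s = (a == xor false b) ∨ s = (a == xor true b) := by decide
lemma bool4 : ∀ s a b : Bool, s = (a == xor false b) → s = (a == xor true b) → False := by decide

/-- For a connected signed graph `G` and a bipartition `(U, W)` of its
vertices into nonempty parts, `β(G) ≥ β(G[U]) + β(G[W]) + |E(U,W)|/2`. -/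
theorem stmt4 {V : Type*} [Fintype V] (G : SimpleGraph V) (sign : V → V → Bool)
    (hsym : ∀ u v, sign u v = sign v u)
    (hconn : G.Connected)
    (U W : Set V) (hcover : U ∪ W = Set.univ) (hdisj : Disjoint U W)
    (hU : U.Nonempty) (hW : W.Nonempty) :
    (beta (G.induce U) (fun a b => sign a.val b.val) : ℚ)
      + (beta (G.induce W) (fun a b => sign a.val b.val) : ℚ)
      + ({e ∈ G.edgeSet | ∃ u ∈ U, ∃ w ∈ W, e = s(u, w)}).ncard / 2
      ≤ (beta G sign : ℚ) := by
  classical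
  obtain ⟨H₁, hH₁le, ⟨f₁, hf₁⟩, hcard₁⟩ :=
    exists_beta_witness (G.induce U) (fun a b => sign a.val b.val)
  obtain ⟨H₂, hH₂le, ⟨f₂, hf₂⟩, hcard₂⟩ :=
    exists_beta_witness (G.induce W) (fun a b => sign a.val b.val)
  have hmemW : ∀ v : V, v ∉ U → v ∈ W := by
    intro v hv
    have : v ∈ U ∪ W := hcover ▸ Set.mem_univ v
    rw [Set.mem_union] at this
    tauto
  have hnotU : ∀ v : V, v ∈ W → v ∉ U := fun v hw hu => Set.disjoint_left.mp hdisj hu hw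
  set f : Bool → V → Bool :=
    fun ε v => if h : v ∈ U then f₁ ⟨v, h⟩ else xor ε (f₂ ⟨v, hmemW v h⟩) with hf_def
  have hfU : ∀ (ε : Bool) (v : V) (hv : v ∈ U), f ε v = f₁ ⟨v, hv⟩ := by
    intro ε v hv; simp only [hf_def, dif_pos hv]
  have hfW : ∀ (ε : Bool) (v : V) (hv : v ∈ W), f ε v = xor ε (f₂ ⟨v, hv⟩) := by
    intro ε v hv
    simp only [hf_def, dif_neg (hnotU v hv)]
  -- the cross graph
  set crossG : Bool → SimpleGraph V := fun ε =>
    { Adj := fun x y => G.Adj x y ∧ ((x ∈ U ∧ y ∈ W) ∨ (x ∈ W ∧ y ∈ U)) ∧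
        sign x y = (f ε x == f ε y)
      symm := ⟨by
        rintro x y ⟨h1, h2, h3⟩
        refine ⟨h1.symm, by tauto, ?_⟩
        rw [hsym y x, h3, bool1]⟩
      loopless := ⟨fun x h => G.loopless.irrefl x h.1⟩ } with hcross_def
  have crossG_adj : ∀ (ε : Bool) (x y : V), (crossG ε).Adj x y ↔
      G.Adj x y ∧ ((x ∈ U ∧ y ∈ W) ∨ (x ∈ W ∧ y ∈ U)) ∧ sign x y = (f ε x == f ε y) := by
    intro ε x y; rw [hcross_def]
  set embU : ↥U ↪ V := ⟨Subtype.val, Subtype.val_injective⟩ with hembU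
  set embW : ↥W ↪ V := ⟨Subtype.val, Subtype.val_injective⟩ with hembW
  set HH : Bool → SimpleGraph V := fun ε => H₁.map embU ⊔ H₂.map embW ⊔ crossG ε with hHH
  have hle : ∀ ε, HH ε ≤ G := by
    intro ε
    refine sup_le (sup_le ?_ ?_) ?_
    · intro x y h
      rw [map_adj] at h
      obtain ⟨a, b, hab, rfl, rfl⟩ := h
      exact hH₁le hab
    · intro x y h
      rw [map_adj] at h
      obtain ⟨a, b, hab, rfl, rfl⟩ := h
      exact hH₂le hab
    · intro x y h
      exact ((crossG_adj ε x y).mp h).1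
  have hbal : ∀ ε, IsBalancedSigned (HH ε) sign := by
    intro ε
    refine ⟨f ε, ?_⟩
    intro x y h
    rw [hHH] at h
    simp only [sup_adj, map_adj] at h
    rcases h with (⟨a, b, hab, rfl, rfl⟩ | ⟨a, b, hab, rfl, rfl⟩) | h
    · show sign a.val b.val = (f ε a.val == f ε b.val)
      rw [hfU ε a.val a.2, hfU ε b.val b.2]
      exact hf₁ a b hab
    · show sign a.val b.val = (f ε a.val == f ε b.val)
      rw [hfW ε a.val a.2, hfW ε b.val b.2, bool2]
      exact hf₂ a b hab
    · exact ((crossG_adj ε _ _).mp h).2.2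
  -- edge sets
  set A₁ : Set (Sym2 V) := Sym2.map embU '' H₁.edgeSet with hA₁def
  set A₂ : Set (Sym2 V) := Sym2.map embW '' H₂.edgeSet with hA₂def
  have hedge : ∀ ε, (HH ε).edgeSet = (A₁ ∪ A₂) ∪ (crossG ε).edgeSet := by
    intro ε
    rw [hHH]
    rw [edgeSet_sup, edgeSet_sup, edgeSet_map', edgeSet_map']
  have hA₁mem : ∀ e ∈ A₁, ∀ x ∈ e, x ∈ U := by
    rintro e ⟨e', he', rfl⟩ x hx
    rw [Sym2.mem_map] at hx
    obtain ⟨a, -, rfl⟩ := hx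
    exact a.2
  have hA₂mem : ∀ e ∈ A₂, ∀ x ∈ e, x ∈ W := by
    rintro e ⟨e', he', rfl⟩ x hx
    rw [Sym2.mem_map] at hx
    obtain ⟨a, -, rfl⟩ := hx
    exact a.2
  have hC : ∀ (ε : Bool), ∀ e ∈ (crossG ε).edgeSet,
      ∃ u ∈ U, ∃ w ∈ W, e = s(u, w) ∧ G.Adj u w ∧ sign u w = (f ε u == f ε w) := by
    intro ε e
    refine Sym2.ind (fun x y he => ?_) e
    rw [mem_edgeSet, crossG_adj] at he
    obtain ⟨h1, h2, h3⟩ := he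
    rcases h2 with ⟨hx, hy⟩ | ⟨hx, hy⟩
    · exact ⟨x, hx, y, hy, rfl, h1, h3⟩
    · exact ⟨y, hy, x, hx, Sym2.eq_swap, h1.symm, by rw [hsym y x, h3, bool1]⟩
  have hCmem : ∀ (ε : Bool) (u w : V), u ∈ U → w ∈ W → G.Adj u w →
      sign u w = (f ε u == f ε w) → s(u, w) ∈ (crossG ε).edgeSet := by
    intro ε u w hu hw hadj hs
    rw [mem_edgeSet, crossG_adj]
    exact ⟨hadj, Or.inl ⟨hu, hw⟩, hs⟩
  have hA₁A₂ : Disjoint A₁ A₂ := by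
    rw [Set.disjoint_left]
    intro e h1 h2
    exact hnotU _ (hA₂mem e h2 _ (Sym2.out_fst_mem e)) (hA₁mem e h1 _ (Sym2.out_fst_mem e))
  have hAC : ∀ ε, Disjoint (A₁ ∪ A₂) (crossG ε).edgeSet := by
    intro ε
    rw [Set.disjoint_left]
    rintro e (h1 | h1) h2 <;>
      obtain ⟨u, hu, w, hw, rfl, -, -⟩ := hC ε e h2
    · exact hnotU w hw (hA₁mem _ h1 w (Sym2.mem_mk_right u w))
    · exact hnotU u (hA₂mem _ h1 u (Sym2.mem_mk_left u w)) hu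
  have hcount : ∀ ε, (HH ε).edgeSet.ncard =
      beta (G.induce U) (fun a b => sign a.val b.val)
        + beta (G.induce W) (fun a b => sign a.val b.val) + (crossG ε).edgeSet.ncard := by
    intro ε
    rw [hedge ε, Set.ncard_union_eq (hAC ε) (Set.toFinite _) (Set.toFinite _),
      Set.ncard_union_eq hA₁A₂ (Set.toFinite _) (Set.toFinite _), hA₁def, hA₂def,
      Set.ncard_image_of_injective _ (Sym2.map.injective embU.injective),
      Set.ncard_image_of_injective _ (Sym2.map.injective embW.injective),
      hcard₁, hcard₂]
  -- the cross edge set of the statement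
  have hCr : {e ∈ G.edgeSet | ∃ u ∈ U, ∃ w ∈ W, e = s(u, w)}
      = (crossG false).edgeSet ∪ (crossG true).edgeSet := by
    ext e
    constructor
    · rintro ⟨heG, u, hu, w, hw, rfl⟩
      have hadj : G.Adj u w := (mem_edgeSet _).mp heG
      rcases bool3 (sign u w) (f₁ ⟨u, hu⟩) (f₂ ⟨w, hw⟩) with h | h
      · exact Or.inl (hCmem false u w hu hw hadj (by rw [hfU false u hu, hfW false w hw]; exact h))
      · exact Or.inr (hCmem true u w hu hw hadj (by rw [hfU true u hu, hfW true w hw]; exact h))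
    · rintro (h | h) <;> obtain ⟨u, hu, w, hw, rfl, hadj, -⟩ := hC _ _ h <;>
        exact ⟨(mem_edgeSet _).mpr hadj, u, hu, w, hw, rfl⟩
  have hCdisj : Disjoint (crossG false).edgeSet (crossG true).edgeSet := by
    rw [Set.disjoint_left]
    intro e h1 h2
    obtain ⟨u, hu, w, hw, rfl, hadj, hs0⟩ := hC false e h1
    have h2' : (crossG true).Adj u w := (mem_edgeSet _).mp h2
    have hs1 : sign u w = (f true u == f true w) := ((crossG_adj true u w).mp h2').2.2
    rw [hfU false u hu, hfW false w hw] at hs0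
    rw [hfU true u hu, hfW true w hw] at hs1
    exact bool4 _ _ _ hs0 hs1
  have hCrcard : ({e ∈ G.edgeSet | ∃ u ∈ U, ∃ w ∈ W, e = s(u, w)}).ncard
      = (crossG false).edgeSet.ncard + (crossG true).edgeSet.ncard := by
    rw [hCr, Set.ncard_union_eq hCdisj (Set.toFinite _) (Set.toFinite _)]
  -- choose the better ε
  have main : ∃ ε : Bool,
      ({e ∈ G.edgeSet | ∃ u ∈ U, ∃ w ∈ W, e = s(u, w)}).ncard ≤ 2 * (crossG ε).edgeSet.ncard := by
    rcases le_total ((crossG false).edgeSet.ncard) ((crossG true).edgeSet.ncard) with h | h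
    · exact ⟨true, by omega⟩
    · exact ⟨false, by omega⟩
  obtain ⟨ε, hε⟩ := main
  have hb : beta (G.induce U) (fun a b => sign a.val b.val)
      + beta (G.induce W) (fun a b => sign a.val b.val) + (crossG ε).edgeSet.ncard
      ≤ beta G sign := by
    rw [← hcount ε]
    exact le_beta (hle ε) (hbal ε)
  have hbq : (beta (G.induce U) (fun a b => sign a.val b.val) : ℚ)
      + (beta (G.induce W) (fun a b => sign a.val b.val) : ℚ)
      + ((crossG ε).edgeSet.ncard : ℚ) ≤ (beta G sign : ℚ) := by exact_mod_cast hb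
  have hεq : (({e ∈ G.edgeSet | ∃ u ∈ U, ∃ w ∈ W, e = s(u, w)}).ncard : ℚ)
      ≤ 2 * ((crossG ε).edgeSet.ncard : ℚ) := by exact_mod_cast hε
  linarith
end

section
/- Let G = (V,E) be a simple graph and let Ē be the edge set of the complement of G. Let H be the graph on vertex set V ∪ Ē in which V induces a clique, Ē induces an independent set, and each vertex e ∈ Ē is adjacent exactly to the two vertices of V that are the endpoints of the non-edge e. Then for every integer p, G has a cut of size at least p if and only if H has a cut of size at least 2|Ē| + p. -/
open SimpleGraph

/-- The size of the cut of `G` given by the bipartition `f : V → Bool`: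
the number of edges with one endpoint in each part. -/
noncomputable def cutSize {V : Type*} (G : SimpleGraph V) (f : V → Bool) : ℕ :=
  {e ∈ G.edgeSet | ∃ u v, e = s(u, v) ∧ f u ≠ f v}.ncard

/-- `maxCut G` : the maximum size of a cut of `G`. -/
noncomputable def maxCut {V : Type*} (G : SimpleGraph V) : ℕ :=
  sSup {m | ∃ f : V → Bool, cutSize G f = m}

/-- The Bodlaender–Jansen graph `H` on vertex set `V ⊕ Ē` (where `Ē` is the edge set of
the complement of `G`): `V` induces a clique, `Ē` induces an independent set, and each
`e ∈ Ē` is adjacent exactly to the two endpoints of the non-edge `e`. -/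
def Hgraph {V : Type*} (G : SimpleGraph V) : SimpleGraph (V ⊕ ↥(Gᶜ.edgeSet)) :=
  SimpleGraph.fromRel (fun x y =>
    match x, y with
    | Sum.inl _, Sum.inl _ => True
    | Sum.inl u, Sum.inr e => u ∈ e.val
    | _, _ => False)

section Aux

variable {V : Type*} (G : SimpleGraph V)

/-- Pairs (vertex, complement-edge) with the vertex an endpoint of the edge. -/
private def Tset : Set (V × ↥(Gᶜ.edgeSet)) := {p | p.1 ∈ (p.2 : Sym2 V)}

/-- The cut pairs among `Tset`. -/
private def Bset (g : V ⊕ ↥(Gᶜ.edgeSet) → Bool) : Set (V × ↥(Gᶜ.edgeSet)) :=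
  {p | p.1 ∈ (p.2 : Sym2 V) ∧ g (Sum.inl p.1) ≠ g (Sum.inr p.2)}

lemma hadj_ll (u v : V) : (Hgraph G).Adj (Sum.inl u) (Sum.inl v) ↔ u ≠ v := by
  simp [Hgraph, SimpleGraph.fromRel_adj]

lemma hadj_lr (u : V) (e : ↥(Gᶜ.edgeSet)) :
    (Hgraph G).Adj (Sum.inl u) (Sum.inr e) ↔ u ∈ (e : Sym2 V) := by
  simp [Hgraph, SimpleGraph.fromRel_adj]

lemma hadj_rr (e e' : ↥(Gᶜ.edgeSet)) : ¬ (Hgraph G).Adj (Sum.inr e) (Sum.inr e') := by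
  simp [Hgraph, SimpleGraph.fromRel_adj]

variable [Fintype V]

/-- Decomposition of the cut of `H`. -/
lemma cutH_eq (g : V ⊕ ↥(Gᶜ.edgeSet) → Bool) :
    cutSize (Hgraph G) g =
      cutSize G (fun u => g (Sum.inl u)) + cutSize Gᶜ (fun u => g (Sum.inl u)) +
        (Bset G g).ncard := by
  classical
  set f : V → Bool := fun u => g (Sum.inl u) with hf
  set SG : Set (Sym2 V) := {e ∈ G.edgeSet | ∃ u v, e = s(u, v) ∧ f u ≠ f v} with hSG
  set SGc : Set (Sym2 V) := {e ∈ Gᶜ.edgeSet | ∃ u v, e = s(u, v) ∧ f u ≠ f v} with hSGc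
  have hFin : Finite (V ⊕ ↥(Gᶜ.edgeSet)) := by infer_instance
  set A : Set (Sym2 (V ⊕ ↥(Gᶜ.edgeSet))) := Sym2.map Sum.inl '' (SG ∪ SGc) with hA
  set B : Set (Sym2 (V ⊕ ↥(Gᶜ.edgeSet))) :=
    (fun p : V × ↥(Gᶜ.edgeSet) => s(Sum.inl p.1, Sum.inr p.2)) '' (Bset G g) with hB
  have hsplit : {x ∈ (Hgraph G).edgeSet | ∃ a b, x = s(a, b) ∧ g a ≠ g b} = A ∪ B := by
    ext x
    simp only [Set.mem_setOf_eq, Set.mem_union]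
    constructor
    · rintro ⟨hx, a, b, rfl, hab⟩
      rw [SimpleGraph.mem_edgeSet] at hx
      match a, b with
      | Sum.inl u, Sum.inl v =>
        left
        refine ⟨s(u, v), ?_, by rw [Sym2.map_pair_eq]⟩
        have huv : u ≠ v := (hadj_ll G u v).mp hx
        by_cases hG : G.Adj u v
        · exact Or.inl ⟨hG, u, v, rfl, hab⟩
        · exact Or.inr ⟨(G.compl_adj u v).mpr ⟨huv, hG⟩, u, v, rfl, hab⟩
      | Sum.inl u, Sum.inr e =>
        right
        exact ⟨(u, e), ⟨(hadj_lr G u e).mp hx, hab⟩, rfl⟩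
      | Sum.inr e, Sum.inl u =>
        right
        refine ⟨(u, e), ⟨(hadj_lr G u e).mp hx.symm, hab.symm⟩, ?_⟩
        rw [Sym2.eq_swap]
      | Sum.inr e, Sum.inr e' => exact absurd hx (hadj_rr G e e')
    · rintro (⟨y, hy, rfl⟩ | ⟨⟨u, e⟩, ⟨hT, hcut⟩, rfl⟩)
      · obtain ⟨u, v, rfl, hcut⟩ : ∃ u v, y = s(u, v) ∧ f u ≠ f v := by
          rcases hy with ⟨-, u, v, rfl, hcut⟩ | ⟨-, u, v, rfl, hcut⟩ <;> exact ⟨u, v, rfl, hcut⟩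
        have huv : u ≠ v := fun h => hcut (by rw [h])
        refine ⟨?_, Sum.inl u, Sum.inl v, by rw [Sym2.map_pair_eq], hcut⟩
        rw [Sym2.map_pair_eq, SimpleGraph.mem_edgeSet]
        exact (hadj_ll G u v).mpr huv
      · refine ⟨?_, Sum.inl u, Sum.inr e, rfl, hcut⟩
        rw [SimpleGraph.mem_edgeSet]
        exact (hadj_lr G u e).mpr hT
  have hdisj : Disjoint A B := by
    rw [Set.disjoint_left]
    rintro x ⟨y, -, rfl⟩ ⟨⟨u, e⟩, -, hxB⟩
    induction y with
    | _ a b =>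
      rw [Sym2.map_pair_eq] at hxB
      rw [Sym2.eq_iff] at hxB
      rcases hxB with ⟨-, h2⟩ | ⟨-, h2⟩
      · exact nomatch h2
      · exact nomatch h2
  have hinjA : Function.Injective (Sym2.map (Sum.inl : V → V ⊕ ↥(Gᶜ.edgeSet))) :=
    Sym2.map.injective Sum.inl_injective
  have hinjB : Function.Injective
      (fun p : V × ↥(Gᶜ.edgeSet) => s(Sum.inl p.1, Sum.inr p.2)) := by
    rintro ⟨u, e⟩ ⟨u', e'⟩ h
    simp only [Sym2.eq_iff] at h
    rcases h with ⟨h1, h2⟩ | ⟨h1, -⟩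
    · exact Prod.ext (Sum.inl_injective h1) (Sum.inr_injective h2)
    · exact nomatch h1
  have hdisjSG : Disjoint SG SGc := by
    have : Disjoint G.edgeSet Gᶜ.edgeSet :=
      (SimpleGraph.disjoint_edgeSet).mpr disjoint_compl_right
    exact this.mono (fun x hx => hx.1) (fun x hx => hx.1)
  rw [cutSize, hsplit, Set.ncard_union_eq hdisj (Set.toFinite _) (Set.toFinite _), hA, hB,
    Set.ncard_image_of_injective _ hinjA, Set.ncard_image_of_injective _ hinjB,
    Set.ncard_union_eq hdisjSG (Set.toFinite _) (Set.toFinite _)]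
  rfl
lemma tset_ncard : (Tset G).ncard = 2 * Gᶜ.edgeSet.ncard := by
  classical
  have hrep : ∀ e : ↥(Gᶜ.edgeSet), ∃ q : V × V, q.1 ≠ q.2 ∧ (e : Sym2 V) = s(q.1, q.2) := by
    rintro ⟨e, he⟩
    induction e with
    | _ a b =>
      exact ⟨(a, b), fun h => (Gᶜ.not_isDiag_of_mem_edgeSet he) (by simpa using h), rfl⟩
  choose q hq1 hq2 using hrep
  have himg : Tset G = (fun z : Bool × ↥(Gᶜ.edgeSet) =>
      (if z.1 then (q z.2).1 else (q z.2).2, z.2)) '' Set.univ := by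
    ext ⟨u, e⟩
    simp only [Set.image_univ, Set.mem_range, Tset, Set.mem_setOf_eq]
    constructor
    · intro hu
      rw [hq2 e, Sym2.mem_iff] at hu
      rcases hu with h | h
      · exact ⟨(true, e), by simp [h.symm]⟩
      · exact ⟨(false, e), by simp [h.symm]⟩
    · rintro ⟨⟨b, e'⟩, hz⟩
      have h2 : e' = e := congrArg Prod.snd hz
      subst h2
      have h1 : (if b then (q e').1 else (q e').2) = u := congrArg Prod.fst hz
      rw [hq2 e', Sym2.mem_iff]
      cases b <;> simp_all
  have hinj : Function.Injective (fun z : Bool × ↥(Gᶜ.edgeSet) =>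
      (if z.1 then (q z.2).1 else (q z.2).2, z.2)) := by
    rintro ⟨b, e⟩ ⟨b', e'⟩ h
    have h2 : e = e' := congrArg Prod.snd h
    subst h2
    have h1 : (if b then (q e).1 else (q e).2) = (if b' then (q e).1 else (q e).2) :=
      congrArg Prod.fst h
    cases b <;> cases b'
    · rfl
    · exact ((hq1 e) (by simpa using h1.symm)).elim
    · exact ((hq1 e) (by simpa using h1)).elim
    · rfl
  rw [himg, Set.ncard_image_of_injective _ hinj, Set.ncard_univ, Nat.card_prod,
    Nat.card_eq_fintype_card (α := Bool), Fintype.card_bool, Nat.card_coe_set_eq]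
lemma diff_ncard_ge (g : V ⊕ ↥(Gᶜ.edgeSet) → Bool) :
    cutSize Gᶜ (fun u => g (Sum.inl u)) ≤ (Tset G \ Bset G g).ncard := by
  classical
  set f : V → Bool := fun u => g (Sum.inl u) with hf
  set S : Set (Sym2 V) := {e ∈ Gᶜ.edgeSet | ∃ u v, e = s(u, v) ∧ f u ≠ f v} with hS
  rw [cutSize, ← hS, ← Nat.card_coe_set_eq, ← Nat.card_coe_set_eq]
  have hex : ∀ x : ↥S, ∃ w, w ∈ (x : Sym2 V) ∧
      g (Sum.inl w) = g (Sum.inr ⟨(x : Sym2 V), x.2.1⟩) := by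
    rintro ⟨x, hx, u, v, rfl, hcut⟩
    simp only [hf] at hcut
    by_cases h : g (Sum.inl u) = g (Sum.inr ⟨s(u, v), hx⟩)
    · exact ⟨u, by simp, h⟩
    · refine ⟨v, by simp, ?_⟩
      have boolfact : ∀ a b c : Bool, a ≠ b → ¬a = c → b = c := by decide
      exact boolfact _ _ _ hcut h
  choose w hw1 hw2 using hex
  have := Finite.of_fintype V
  refine Nat.card_le_card_of_injective
    (fun x => (⟨(w x, ⟨(x : Sym2 V), x.2.1⟩), hw1 x, fun hB => hB.2 (hw2 x)⟩ :
      ↥(Tset G \ Bset G g))) ?_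
  intro x y h
  have h2 : ((⟨(x : Sym2 V), x.2.1⟩ : ↥(Gᶜ.edgeSet)) : Sym2 V) =
      ((⟨(y : Sym2 V), y.2.1⟩ : ↥(Gᶜ.edgeSet)) : Sym2 V) :=
    congrArg (fun z : ↥(Tset G \ Bset G g) => ((z : V × ↥(Gᶜ.edgeSet)).2 : Sym2 V)) h
  exact Subtype.ext h2
lemma diff_ncard_le (g : V ⊕ ↥(Gᶜ.edgeSet) → Bool)
    (hgood : ∀ e : ↥(Gᶜ.edgeSet), g (Sum.inr e) =
      !(Sym2.lift ⟨fun a b => g (Sum.inl a) && g (Sum.inl b),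
        fun a b => Bool.and_comm _ _⟩ (e : Sym2 V))) :
    (Tset G \ Bset G g).ncard ≤ cutSize Gᶜ (fun u => g (Sum.inl u)) := by
  classical
  set f : V → Bool := fun u => g (Sum.inl u) with hf
  set S : Set (Sym2 V) := {e ∈ Gᶜ.edgeSet | ∃ u v, e = s(u, v) ∧ f u ≠ f v} with hS
  rw [cutSize, ← hS, ← Nat.card_coe_set_eq, ← Nat.card_coe_set_eq]
  have := Finite.of_fintype V
  -- each p = (u, e) in T \ B has f u = g (inr e); show e is a cut edge
  have hmem : ∀ p : ↥(Tset G \ Bset G g), ((p : V × ↥(Gᶜ.edgeSet)).2 : Sym2 V) ∈ S := by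
    rintro ⟨⟨u, e⟩, hT, hB⟩
    have hu : u ∈ (e : Sym2 V) := hT
    have heq : f u = g (Sum.inr e) := by
      by_contra hne
      exact hB ⟨hT, fun h => hne h⟩
    obtain ⟨v, hspec⟩ : ∃ v, s(u, v) = (e : Sym2 V) := ⟨_, Sym2.other_spec hu⟩
    have hlift : g (Sum.inr e) = !(f u && f v) := by
      rw [hgood e, ← hspec, Sym2.lift_mk]
    have hne : f u ≠ f v := by
      rw [hlift] at heq
      have boolfact : ∀ a b : Bool, a = !(a && b) → a ≠ b := by decide
      exact boolfact _ _ heq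
    exact ⟨e.2, u, v, hspec.symm, hne⟩
  refine Nat.card_le_card_of_injective
    (fun p => (⟨((p : V × ↥(Gᶜ.edgeSet)).2 : Sym2 V), hmem p⟩ : ↥S)) ?_
  rintro ⟨⟨u, e⟩, hT, hB⟩ ⟨⟨u', e'⟩, hT', hB'⟩ h
  have he : e = e' := Subtype.ext (congrArg (fun z : ↥S => (z : Sym2 V)) h)
  subst he
  -- now show u = u'
  have hu : u ∈ (e : Sym2 V) := hT
  have hu' : u' ∈ (e : Sym2 V) := hT'
  have heq : f u = g (Sum.inr e) := by
    by_contra hne; exact hB ⟨hT, fun h => hne h⟩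
  have heq' : f u' = g (Sum.inr e) := by
    by_contra hne; exact hB' ⟨hT', fun h => hne h⟩
  obtain ⟨v, hspec⟩ : ∃ v, s(u, v) = (e : Sym2 V) := ⟨_, Sym2.other_spec hu⟩
  have hlift : g (Sum.inr e) = !(f u && f v) := by
    rw [hgood e, ← hspec, Sym2.lift_mk]
  have hfu : f u = true ∧ f v = false := by
    rw [hlift] at heq
    have boolfact : ∀ a b : Bool, a = !(a && b) → a = true ∧ b = false := by decide
    exact boolfact _ _ heq
  have huu' : u' = u := by
    rw [← hspec, Sym2.mem_iff] at hu'
    rcases hu' with h | h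
    · exact h
    · exfalso
      rw [h] at heq'
      rw [hlift, hfu.1, hfu.2] at heq'
      exact absurd heq' (by decide)
  subst huu'
  rfl
lemma key (g : V ⊕ ↥(Gᶜ.edgeSet) → Bool) :
    cutSize (Hgraph G) g + (Tset G \ Bset G g).ncard =
      cutSize G (fun u => g (Sum.inl u)) + cutSize Gᶜ (fun u => g (Sum.inl u)) +
        2 * Gᶜ.edgeSet.ncard := by
  have h1 := cutH_eq G g
  have h2 : (Tset G \ Bset G g).ncard + (Bset G g).ncard = (Tset G).ncard :=
    Set.ncard_diff_add_ncard_of_subset (fun p hp => hp.1) (Set.toFinite _)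
  have h3 := tset_ncard G
  omega

end Aux

/-- `G` has a cut of size at least `p` iff the Bodlaender–Jansen graph `H`
has a cut of size at least `2|Ē| + p`. -/
theorem stmt14 {V : Type*} [Fintype V] (G : SimpleGraph V) (p : ℕ) :
    (∃ f : V → Bool, p ≤ cutSize G f) ↔
      (∃ g : V ⊕ ↥(Gᶜ.edgeSet) → Bool,
        2 * Gᶜ.edgeSet.ncard + p ≤ cutSize (Hgraph G) g) := by
  constructor
  · rintro ⟨f, hf⟩
    refine ⟨Sum.elim f (fun e => !(Sym2.lift ⟨fun a b => f a && f b,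
      fun a b => Bool.and_comm _ _⟩ (e : Sym2 V))), ?_⟩
    set g : V ⊕ ↥(Gᶜ.edgeSet) → Bool := Sum.elim f (fun e => !(Sym2.lift ⟨fun a b => f a && f b,
      fun a b => Bool.and_comm _ _⟩ (e : Sym2 V))) with hg
    have hfg : (fun u => g (Sum.inl u)) = f := rfl
    have h1 := key G g
    have h2 := diff_ncard_le G g (fun e => rfl)
    rw [hfg] at h1 h2
    omega
  · rintro ⟨g, hg⟩
    refine ⟨fun u => g (Sum.inl u), ?_⟩
    have h1 := key G g
    have h2 := diff_ncard_ge G g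
    omega
end

section
/- Let G be a connected 1*-split graph with at least two vertices, with a partition of V(G) into a clique K and an independent set I witnessing the 1*-split property (so every vertex of I has degree exactly 1 and every vertex of K has at least one neighbor in I). Then MaxCut(G) = ⌊|K|²/4⌋ + |I|, attained by a balanced bipartition of K in which each vertex of I is placed in the part opposite to its unique neighbor. -/
open SimpleGraph

lemma ncard_prod_aux {V : Type*} (A B : Set V) : (A ×ˢ B).ncard = A.ncard * B.ncard := by
  rw [← Nat.card_coe_set_eq, ← Nat.card_coe_set_eq, ← Nat.card_coe_set_eq,
    Nat.card_congr (Equiv.Set.prod A B), Nat.card_prod]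

/-- for a connected `1*`-split graph `G` with witnessing partition `(K, I)`
(every vertex of `I` has degree exactly 1, every vertex of `K` has a neighbor in `I`),
`MaxCut(G) = ⌊|K|²/4⌋ + |I|`, attained by a balanced bipartition of `K` in which each
vertex of `I` is placed opposite to its unique neighbor. -/
theorem stmt16 {V : Type*} [Fintype V] (G : SimpleGraph V)
    (hconn : G.Connected) (h2 : 2 ≤ Fintype.card V)
    (K I : Set V) (hcover : K ∪ I = Set.univ) (hdisj : Disjoint K I)
    (hK : G.IsClique K)
    (hI : ∀ u ∈ I, ∀ v ∈ I, ¬ G.Adj u v)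
    (hKnbr : ∀ v ∈ K, ∃ u ∈ I, G.Adj v u)
    (hIdeg : ∀ v ∈ I, (G.neighborSet v).ncard = 1) :
    maxCut G = K.ncard ^ 2 / 4 + I.ncard ∧
    ∃ f : V → Bool,
      cutSize G f = K.ncard ^ 2 / 4 + I.ncard ∧
      {v ∈ K | f v = true}.ncard = K.ncard / 2 ∧
      (∀ v ∈ I, ∀ u, G.Adj v u → f v ≠ f u) := by
  classical
  -- the unique-neighbor function
  set nbr : V → V := fun v => if h : (G.neighborSet v).Nonempty then h.some else v with hnbrdef
  have hnbr : ∀ v ∈ I, G.neighborSet v = {nbr v} := by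
    intro v hv
    obtain ⟨u, hu⟩ := Set.ncard_eq_one.mp (hIdeg v hv)
    have hne : (G.neighborSet v).Nonempty := ⟨u, by rw [hu]; rfl⟩
    have h1 : nbr v ∈ G.neighborSet v := by
      simp only [hnbrdef, dif_pos hne]; exact hne.some_mem
    rw [hu] at h1 ⊢
    rw [Set.mem_singleton_iff] at h1
    rw [h1]
  have hadjnbr : ∀ v ∈ I, G.Adj v (nbr v) := by
    intro v hv
    have : nbr v ∈ G.neighborSet v := by rw [hnbr v hv]; rfl
    exact this
  have huniq : ∀ v ∈ I, ∀ u, G.Adj v u → u = nbr v := by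
    intro v hv u hu
    have : u ∈ G.neighborSet v := hu
    rw [hnbr v hv] at this
    exact this
  have hnbrK : ∀ v ∈ I, nbr v ∈ K := by
    intro v hv
    by_contra h
    have : nbr v ∈ K ∪ I := by rw [hcover]; trivial
    rcases this with h' | h'
    · exact h h'
    · exact hI v hv (nbr v) h' (hadjnbr v hv)
  have mem_cut : ∀ (f : V → Bool) (a b : V),
      s(a, b) ∈ {e ∈ G.edgeSet | ∃ u v, e = s(u, v) ∧ f u ≠ f v} ↔
        G.Adj a b ∧ f a ≠ f b := by
    intro f a b
    simp only [Set.mem_setOf_eq, mem_edgeSet]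
    constructor
    · rintro ⟨hadj, u, v, huv, hne⟩
      refine ⟨hadj, ?_⟩
      rcases Sym2.eq_iff.mp huv.symm with ⟨rfl, rfl⟩ | ⟨rfl, rfl⟩
      · exact hne
      · exact hne.symm
    · rintro ⟨hadj, hne⟩; exact ⟨hadj, a, b, rfl, hne⟩
  -- key counting identity
  have key : ∀ f : V → Bool,
      cutSize G f = {v ∈ K | f v = true}.ncard * {v ∈ K | f v = false}.ncard
        + {v ∈ I | f v ≠ f (nbr v)}.ncard := by
    intro f
    set A := {v ∈ K | f v = true} with hA
    set B := {v ∈ K | f v = false} with hB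
    set C := {v ∈ I | f v ≠ f (nbr v)} with hC
    have hsplit : {e ∈ G.edgeSet | ∃ u v, e = s(u, v) ∧ f u ≠ f v}
        = Function.uncurry Sym2.mk '' (A ×ˢ B) ∪ (fun v => s(v, nbr v)) '' C := by
      ext e
      induction e with
      | _ a b =>
        rw [mem_cut f a b]
        constructor
        · rintro ⟨hadj, hne⟩
          by_cases haI : a ∈ I
          · right
            have hb : b = nbr a := huniq a haI b hadj
            exact ⟨a, ⟨haI, by rw [← hb]; exact hne⟩, by rw [hb]⟩
          · have haK : a ∈ K := by
              have : a ∈ K ∪ I := by rw [hcover]; trivial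
              rcases this with h' | h'
              · exact h'
              · exact absurd h' haI
            by_cases hbI : b ∈ I
            · right
              have ha' : a = nbr b := huniq b hbI a hadj.symm
              refine ⟨b, ⟨hbI, by rw [← ha']; exact hne.symm⟩, ?_⟩
              show s(b, nbr b) = s(a, b)
              rw [← ha', Sym2.eq_swap]
            · have hbK : b ∈ K := by
                have : b ∈ K ∪ I := by rw [hcover]; trivial
                rcases this with h' | h'
                · exact h'
                · exact absurd h' hbI
              left
              cases hfa : f a
              · have hfb : f b = true := by
                  revert hne; cases hfb : f b <;> simp [hfa]
                exact ⟨(b, a), ⟨⟨hbK, hfb⟩, haK, hfa⟩, Sym2.eq_swap⟩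
              · have hfb : f b = false := by
                  revert hne; cases hfb : f b <;> simp [hfa]
                exact ⟨(a, b), ⟨⟨haK, hfa⟩, hbK, hfb⟩, rfl⟩
        · rintro (⟨⟨x, y⟩, ⟨⟨hxK, hfx⟩, hyK, hfy⟩, hxy⟩ | ⟨v, ⟨hvI, hvne⟩, hv⟩)
          · have hxyne : x ≠ y := by
              intro h; rw [h, hfy] at hfx; simp at hfx
            have hadj : G.Adj x y := hK hxK hyK hxyne
            have hxy' : s(x, y) = s(a, b) := hxy
            rcases Sym2.eq_iff.mp hxy' with ⟨rfl, rfl⟩ | ⟨rfl, rfl⟩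
            · exact ⟨hadj, by simp [hfx, hfy]⟩
            · exact ⟨hadj.symm, by simp [hfx, hfy]⟩
          · have hadj := hadjnbr v hvI
            have hv' : s(v, nbr v) = s(a, b) := hv
            rcases Sym2.eq_iff.mp hv' with ⟨rfl, rfl⟩ | ⟨rfl, rfl⟩
            · exact ⟨hadj, hvne⟩
            · exact ⟨hadj.symm, hvne.symm⟩
    have hdisj2 : Disjoint (Function.uncurry Sym2.mk '' (A ×ˢ B)) ((fun v => s(v, nbr v)) '' C) := by
      rw [Set.disjoint_left]
      rintro e ⟨⟨x, y⟩, ⟨⟨hxK, _⟩, hyK, _⟩, rfl⟩ ⟨v, ⟨hvI, _⟩, hv⟩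
      have hv' : s(v, nbr v) = s(x, y) := hv
      rcases Sym2.eq_iff.mp hv' with ⟨rfl, _⟩ | ⟨rfl, _⟩
      · exact Set.disjoint_left.mp hdisj hxK hvI
      · exact Set.disjoint_left.mp hdisj hyK hvI
    have hinjK : Set.InjOn (Function.uncurry Sym2.mk) (A ×ˢ B) := by
      rintro ⟨x, y⟩ ⟨⟨hxK, hfx⟩, hyK, hfy⟩ ⟨x', y'⟩ ⟨⟨hx'K, hfx'⟩, hy'K, hfy'⟩ h
      have h' : s(x, y) = s(x', y') := h
      rcases Sym2.eq_iff.mp h' with ⟨rfl, rfl⟩ | ⟨rfl, rfl⟩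
      · rfl
      · rw [hfx] at hfy'; simp at hfy'
    have hinjI : Set.InjOn (fun v => s(v, nbr v)) C := by
      rintro v ⟨hvI, _⟩ w ⟨hwI, _⟩ h
      have h' : s(v, nbr v) = s(w, nbr w) := h
      rcases Sym2.eq_iff.mp h' with ⟨rfl, _⟩ | ⟨h1, h2⟩
      · rfl
      · exfalso
        have hadj := hadjnbr w hwI
        rw [← h1] at hadj
        exact hI w hwI v hvI hadj
    rw [cutSize, hsplit, Set.ncard_union_eq hdisj2 (Set.toFinite _) (Set.toFinite _),
      Set.ncard_image_of_injOn hinjK, Set.ncard_image_of_injOn hinjI, ncard_prod_aux]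
  -- cardinalities of the two parts of K sum to |K|
  have sumAB : ∀ f : V → Bool,
      {v ∈ K | f v = true}.ncard + {v ∈ K | f v = false}.ncard = K.ncard := by
    intro f
    rw [← Set.ncard_union_eq (by
      rw [Set.disjoint_left]; rintro v ⟨_, h1⟩ ⟨_, h2⟩; rw [h1] at h2; simp at h2)
      (Set.toFinite _) (Set.toFinite _)]
    congr 1
    ext v
    simp only [Set.mem_union, Set.mem_setOf_eq]
    constructor
    · rintro (⟨h, _⟩ | ⟨h, _⟩) <;> exact h
    · intro h; cases hfv : f v
      · right; exact ⟨h, rfl⟩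
      · left; exact ⟨h, rfl⟩
  -- arithmetic facts
  have hprod : ∀ a b : ℕ, a + b = K.ncard → a * b ≤ K.ncard ^ 2 / 4 := by
    intro a b hab
    have hab' : (a : ℤ) + b = K.ncard := by exact_mod_cast hab
    have h4 : 4 * (a * b) ≤ K.ncard ^ 2 := by
      zify
      nlinarith [sq_nonneg ((a : ℤ) - b)]
    calc a * b = 4 * (a * b) / 4 := by omega
      _ ≤ K.ncard ^ 2 / 4 := Nat.div_le_div_right h4
  have hhalf : K.ncard / 2 * (K.ncard - K.ncard / 2) = K.ncard ^ 2 / 4 := by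
    rcases Nat.even_or_odd K.ncard with ⟨m, hm⟩ | ⟨m, hm⟩
    · rw [hm]
      have h1 : m + m = 2 * m := by ring
      have h2 : (m + m) ^ 2 = 4 * (m * m) := by ring
      rw [h2]
      rw [Nat.mul_div_cancel_left (m * m) (by norm_num)]
      have : (m + m) / 2 = m := by omega
      rw [this]
      have : m + m - m = m := by omega
      rw [this]
    · rw [hm]
      have h2 : (2 * m + 1) ^ 2 = 4 * (m * m + m) + 1 := by ring
      rw [h2]
      have h3 : (2 * m + 1) / 2 = m := by omega
      rw [h3]
      have h4 : 2 * m + 1 - m = m + 1 := by omega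
      rw [h4]
      have h5 : m * (m + 1) = m * m + m := by ring
      rw [h5]
      generalize m * m + m = q
      omega
  -- upper bound for every cut
  have hub : ∀ f : V → Bool, cutSize G f ≤ K.ncard ^ 2 / 4 + I.ncard := by
    intro f
    rw [key f]
    have h1 := hprod _ _ (sumAB f)
    have h2 : {v ∈ I | f v ≠ f (nbr v)}.ncard ≤ I.ncard :=
      Set.ncard_le_ncard (fun v hv => hv.1) (Set.toFinite _)
    omega
  -- the optimal cut
  obtain ⟨S, hSsub, hScard⟩ :=
    Set.exists_subset_card_eq (show K.ncard / 2 ≤ K.ncard from Nat.div_le_self _ _)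
  set f : V → Bool := fun v => if v ∈ K then decide (v ∈ S) else !decide (nbr v ∈ S) with hf
  have hfK : ∀ v ∈ K, f v = decide (v ∈ S) := by
    intro v hv; simp only [hf, if_pos hv]
  have hfI : ∀ v ∈ I, f v = !decide (nbr v ∈ S) := by
    intro v hv
    have hvK : v ∉ K := Set.disjoint_right.mp hdisj hv
    simp only [hf, if_neg hvK]
  have hAeq : {v ∈ K | f v = true} = S := by
    ext v
    simp only [Set.mem_setOf_eq]
    constructor
    · rintro ⟨hvK, hft⟩
      rw [hfK v hvK] at hft
      exact of_decide_eq_true hft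
    · intro hvS
      refine ⟨hSsub hvS, ?_⟩
      rw [hfK v (hSsub hvS)]
      simp [hvS]
  have hBeq : {v ∈ K | f v = false} = K \ S := by
    ext v
    simp only [Set.mem_setOf_eq, Set.mem_diff]
    constructor
    · rintro ⟨hvK, hff⟩
      refine ⟨hvK, ?_⟩
      intro hvS
      rw [hfK v hvK] at hff
      simp [hvS] at hff
    · rintro ⟨hvK, hvS⟩
      refine ⟨hvK, ?_⟩
      rw [hfK v hvK]
      simp [hvS]
  have hCeq : {v ∈ I | f v ≠ f (nbr v)} = I := by
    ext v
    simp only [Set.mem_setOf_eq]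
    constructor
    · rintro ⟨hvI, _⟩; exact hvI
    · intro hvI
      refine ⟨hvI, ?_⟩
      rw [hfI v hvI, hfK (nbr v) (hnbrK v hvI)]
      cases decide (nbr v ∈ S) <;> simp
  have hcutf : cutSize G f = K.ncard ^ 2 / 4 + I.ncard := by
    rw [key f, hAeq, hBeq, hCeq, hScard,
      Set.ncard_diff hSsub (Set.toFinite _), hScard, hhalf]
  have hopp : ∀ v ∈ I, ∀ u, G.Adj v u → f v ≠ f u := by
    intro v hv u hadj
    rw [huniq v hv u hadj]
    rw [hfI v hv, hfK (nbr v) (hnbrK v hv)]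
    cases decide (nbr v ∈ S) <;> simp
  have hmem : K.ncard ^ 2 / 4 + I.ncard ∈ {m | ∃ f : V → Bool, cutSize G f = m} :=
    ⟨f, hcutf⟩
  have hbdd : K.ncard ^ 2 / 4 + I.ncard ∈ upperBounds {m | ∃ f : V → Bool, cutSize G f = m} := by
    rintro m ⟨g, rfl⟩; exact hub g
  refine ⟨le_antisymm (csSup_le ⟨_, hmem⟩ hbdd) (le_csSup ⟨_, hbdd⟩ hmem), f, hcutf, ?_, hopp⟩
  rw [hAeq, hScard]
end
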